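/- If two different Oroots obtained with respect to the same alphabet order overlap as intervals, then their overlap equals the shorter of the two Oroots; consequently, two same-order Oroots are either nested (one contained in the other) or disjoint. -/

import Mathlib

open List

universe u

/-- The factor `w[i..j]` of a word (inclusive positions). -/
def factor {α : Type u} (w : List α) (i j : ℕ) : List α := (w.drop i).take (j - i + 1)

/-- `p` is a period length of the word `u`. -/
def HasPeriodLen {α : Type u} (u : List α) (p : ℕ) : Prop :=
  1 ≤ p ∧ ∀ k, k + p < u.length → u[k]? = u[k + p]?

/-- The smallest period of a word. -/
noncomputable def minPeriod {α : Type u} (u : List α) : ℕ := sInf {p | HasPeriodLen u p}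

/-- `[i..j]` is a run in `w`: the factor is periodic with smallest period at most half
its length, and the periodicity extends neither to the left nor to the right. -/
def IsRun {α : Type u} (w : List α) (i j : ℕ) : Prop :=
  i < j ∧ j < w.length ∧
  2 * minPeriod (factor w i j) ≤ j - i + 1 ∧
  (0 < i → minPeriod (factor w i j) < minPeriod (factor w (i - 1) j)) ∧
  (j + 1 < w.length → minPeriod (factor w i j) < minPeriod (factor w i (j + 1)))
/-- `k` is the starting position of the greatest proper suffix of the factor `w[i..j]`,
with respect to the strict order `lt` on words. -/
def IsGreatestProperSuffixPos {α : Type u} (lt : List α → List α → Prop)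
    (w : List α) (i j k : ℕ) : Prop :=
  i < k ∧ k ≤ j ∧ ∀ k', i < k' → k' ≤ j → k' ≠ k → lt (factor w k' j) (factor w k j)
/-- `listPow u n` is the `n`-th power `u^n` of the word `u`. -/
def listPow {α : Type u} (v : List α) : ℕ → List α
  | 0 => []
  | n + 1 => v ++ listPow v n

/-- A word is primitive if it is not a proper power. -/
def Primitive {α : Type u} (v : List α) : Prop :=
  v ≠ [] ∧ ∀ r n, 2 ≤ n → v ≠ listPow r n

/-- `c` is a conjugate (rotation) of `v`. -/
def IsConjWord {α : Type u} (v c : List α) : Prop := ∃ s t, v = s ++ t ∧ c = t ++ s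
/-- `u` is a Lyndon word for the alphabet order `r`: nonempty and lexicographically
smaller than each of its proper nonempty suffixes. -/
def IsLyndonWrt {α : Type u} (r : α → α → Prop) (v : List α) : Prop :=
  v ≠ [] ∧ ∀ t, t <:+ v → t ≠ v → t ≠ [] → List.Lex r v t

/-- The run `[i..j]` in `w` is governed by the order `r`: either the run ends the word,
or the letter following the run is `r`-smaller than the letter one period before it. -/
noncomputable def UseOrd {α : Type u} (r : α → α → Prop) (w : List α) (i j : ℕ) : Prop :=
  j + 1 = w.length ∨
    ∃ a b, w[j + 1]? = some a ∧ w[j + 1 - minPeriod (factor w i j)]? = some b ∧ r a b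

/-- `v` is the Lyndon root (w.r.t. the order `r`) of the run `[i..j]` of `w`:
the Lyndon conjugate of its root. -/
def LyndonRootOf {α : Type u} (r : α → α → Prop) (w : List α) (i j : ℕ) (v : List α) : Prop :=
  IsLyndonWrt r v ∧ IsConjWord (factor w i (i + minPeriod (factor w i j) - 1)) v

/-- `[a..b]` is the Lroot of the run `[i..j]` of `w`: the interval of the first occurrence,
inside the run, of the Lyndon root of the run, taken with respect to the lexicographic order
determined by the letter following the run. -/
noncomputable def IsLroot {α : Type u} [LinearOrder α] (w : List α) (i j a b : ℕ) : Prop :=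
  IsRun w i j ∧
  ∃ v, ((UseOrd (· < ·) w i j ∧ LyndonRootOf (· < ·) w i j v) ∨
        (¬ UseOrd (· < ·) w i j ∧ LyndonRootOf (· > ·) w i j v)) ∧
    i ≤ a ∧ b ≤ j ∧ b + 1 = a + v.length ∧ factor w a b = v ∧
    ∀ a', i ≤ a' → a' < a → factor w a' (a' + v.length - 1) ≠ v
/-- `[a..b]` is the Oroot of the run `[i..j]` of `w` (Bannai et al.): if the run ends the
word, or the letter following the run is smaller than the letter one period before it,
it is the first occurrence of a Lyndon root of the run that is not a prefix of the run;
otherwise it is the interval of the length-`p` prefix of the greatest proper suffix of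
the run factor. -/
noncomputable def IsOroot {α : Type u} [LinearOrder α] (w : List α) (i j a b : ℕ) : Prop :=
  IsRun w i j ∧ b + 1 = a + minPeriod (factor w i j) ∧
  ((UseOrd (· < ·) w i j ∧ i < a ∧ b ≤ j ∧
      ∃ v, (LyndonRootOf (· < ·) w i j v ∨ LyndonRootOf (· > ·) w i j v) ∧
        factor w a b = v ∧
        ∀ a', i < a' → a' < a → factor w a' (a' + minPeriod (factor w i j) - 1) ≠ v) ∨
    (¬ UseOrd (· < ·) w i j ∧
      IsGreatestProperSuffixPos (List.Lex (· < ·)) w i j a))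

/-- `[a..b]` is the Oroot of the run `[i..j]` of `w` obtained with respect to the
alphabet order `r`: the run is governed by `r`, and `[a..b]` is the first occurrence of
the `r`-Lyndon root of the run that is not a prefix of the run. -/
noncomputable def IsOrootOrd {α : Type u} (r : α → α → Prop) (w : List α) (i j a b : ℕ) : Prop :=
  IsRun w i j ∧ UseOrd r w i j ∧ b + 1 = a + minPeriod (factor w i j) ∧ i < a ∧ b ≤ j ∧
  LyndonRootOf r w i j (factor w a b) ∧
  ∀ a', i < a' → a' < a → factor w a' (a' + minPeriod (factor w i j) - 1) ≠ factor w a b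

/-!
Suppose the Oroot `u = w[a₁..b₁]` of one run were overlapped from the right by the Oroot
`v = w[a₂..b₂]` of another, `a₁ < a₂ ≤ b₁ < b₂`, and split `v = y ++ y'` at `b₁`. Since `u` is
Lyndon and `y` is a shorter suffix of it, `u` beats `y` strictly inside `y`, so every word
comparable to `u` under the prefix order is smaller than `v`; this applies to the word
`x = w[a₁..b₂ - p]` one period to the left of `y'`. On the other hand `v < y'` as `v` is Lyndon,
and `y' ≤ x` because shifting by the period does not change letters inside the run, while at
the first letter after the run the order governing the run makes `y'` smaller. Hence `v < v`.
-/

section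

variable {α : Type u}

namespace List

theorem Lex.append_of_not_isPrefix {r : α → α → Prop} {l₁ l₂ : List α} (h : Lex r l₁ l₂)
    (hp : ¬ l₁ <+: l₂) (s t : List α) : Lex r (l₁ ++ s) (l₂ ++ t) := by
  induction h with
  | nil => exact absurd nil_prefix hp
  | rel hab => exact Lex.rel hab
  | cons _ ih => exact Lex.cons (ih fun h => hp (cons_prefix_cons.mpr ⟨rfl, h⟩))

theorem Lex.of_isPrefix_left {r : α → α → Prop} {x l₁ l₂ : List α} (h : Lex r l₁ l₂)
    (hx : x <+: l₁) : Lex r x l₂ := by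
  induction h generalizing x with
  | nil => rw [eq_nil_of_prefix_nil hx]; exact Lex.nil
  | rel hab =>
    rcases x with _ | ⟨c, x⟩
    · exact Lex.nil
    · obtain ⟨rfl, -⟩ := cons_prefix_cons.mp hx
      exact Lex.rel hab
  | cons _ ih =>
    rcases x with _ | ⟨c, x⟩
    · exact Lex.nil
    · obtain ⟨rfl, hx'⟩ := cons_prefix_cons.mp hx
      exact Lex.cons (ih hx')

theorem lex_of_getElem?_eq_of_lt {r : α → α → Prop} {l₁ l₂ : List α} {m : ℕ} {c₁ c₂ : α}
    (hagree : ∀ t < m, l₁[t]? = l₂[t]?) (h₁ : l₁[m]? = some c₁) (h₂ : l₂[m]? = some c₂)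
    (hc : r c₁ c₂) : Lex r l₁ l₂ := by
  have htake : l₁.take m = l₂.take m := ext_getElem? fun t => by
    simp only [getElem?_take]
    split_ifs with ht
    exacts [hagree t ht, rfl]
  obtain ⟨hm₁, rfl⟩ := getElem?_eq_some_iff.mp h₁
  obtain ⟨hm₂, rfl⟩ := getElem?_eq_some_iff.mp h₂
  rw [← take_append_drop m l₁, ← take_append_drop m l₂, htake, drop_eq_getElem_cons hm₁,
    drop_eq_getElem_cons hm₂]
  exact Lex.append_left r (Lex.rel hc) _

end List

theorem length_factor {w : List α} {i j : ℕ} (hij : i ≤ j) (hj : j < w.length) :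
    (factor w i j).length = j - i + 1 := by
  simp only [factor, length_take, length_drop]
  omega

theorem getElem?_factor (w : List α) {i j t : ℕ} (ht : t ≤ j - i) :
    (factor w i j)[t]? = w[i + t]? := by
  rw [factor, getElem?_take, if_pos (by omega), getElem?_drop]

theorem getElem?_factor_eq_none (w : List α) {i j t : ℕ} (ht : j - i < t) :
    (factor w i j)[t]? = none := by
  rw [factor, getElem?_take, if_neg (by omega)]

theorem factor_isPrefix_drop (w : List α) (i j : ℕ) : factor w i j <+: w.drop i :=
  take_prefix _ _

theorem factor_isSuffix_factor (w : List α) {i k j : ℕ} (hik : i ≤ k) (hkj : k ≤ j) :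
    factor w k j <:+ factor w i j := by
  have hdrop : (factor w i j).drop (k - i) = factor w k j := by
    simp only [factor, drop_take, drop_drop]
    rw [Nat.add_sub_cancel' hik]
    congr 1
    omega
  exact hdrop ▸ drop_suffix _ _

theorem factor_append_factor (w : List α) {i k j : ℕ} (hik : i ≤ k) (hkj : k < j) :
    factor w i k ++ factor w (k + 1) j = factor w i j := by
  simp only [factor]
  rw [show j - i + 1 = (k - i + 1) + (j - (k + 1) + 1) by omega, take_add (i := k - i + 1),
    drop_drop, show i + (k - i + 1) = k + 1 by omega]

theorem hasPeriodLen_minPeriod {v : List α} (hv : v ≠ []) : HasPeriodLen v (minPeriod v) :=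
  Nat.sInf_mem (s := {p | HasPeriodLen v p})
    ⟨v.length, length_pos_iff.mpr hv, fun _ _ => by omega⟩

theorem IsLyndonWrt.lex_factor {r : α → α → Prop} {w : List α} {i k j : ℕ}
    (h : IsLyndonWrt r (factor w i j)) (hik : i < k) (hkj : k ≤ j) (hj : j < w.length) :
    Lex r (factor w i j) (factor w k j) := by
  have hlen := length_factor (w := w) (hik.le.trans hkj) hj
  have hlen' := length_factor (w := w) hkj hj
  refine h.2 _ (factor_isSuffix_factor w hik.le hkj) (fun he => ?_) (fun he => ?_)
  · rw [he] at hlen'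
    omega
  · rw [he, length_nil] at hlen'
    omega

namespace IsRun

variable {w : List α} {i j : ℕ}

theorem getElem?_add_minPeriod (h : IsRun w i j) {k : ℕ} (hik : i ≤ k)
    (hkj : k + minPeriod (factor w i j) ≤ j) :
    w[k]? = w[k + minPeriod (factor w i j)]? := by
  set p := minPeriod (factor w i j)
  have hlen := length_factor (w := w) h.1.le h.2.1
  have hper := (hasPeriodLen_minPeriod (v := factor w i j) (ne_nil_of_length_pos (by omega))).2
    (k - i) (by omega)
  rwa [getElem?_factor w (by omega), getElem?_factor w (by omega),
    show i + (k - i) = k by omega, show i + (k - i + p) = k + p by omega] at hper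

theorem factor_eq_or_lex_factor_sub_minPeriod {r : α → α → Prop} (h : IsRun w i j)
    (huse : UseOrd r w i j) {s e : ℕ} (his : i ≤ s)
    (hsj : s + minPeriod (factor w i j) ≤ j + 1) (hse : s + minPeriod (factor w i j) ≤ e)
    (he : e < w.length) :
    factor w (s + minPeriod (factor w i j)) e = factor w s (e - minPeriod (factor w i j)) ∨
      Lex r (factor w (s + minPeriod (factor w i j)) e)
        (factor w s (e - minPeriod (factor w i j))) := by
  set p := minPeriod (factor w i j)
  have hagree : ∀ t, t ≤ e - (s + p) → s + p + t ≤ j →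
      (factor w (s + p) e)[t]? = (factor w s (e - p))[t]? := fun t ht htj => by
    rw [getElem?_factor w ht, getElem?_factor w (by omega),
      h.getElem?_add_minPeriod (k := s + t) (by omega) (by omega), Nat.add_right_comm]
  by_cases hej : e ≤ j
  · refine Or.inl (ext_getElem? fun t => ?_)
    by_cases ht : t ≤ e - (s + p)
    · exact hagree t ht (by omega)
    · rw [getElem?_factor_eq_none w (by omega), getElem?_factor_eq_none w (by omega)]
  · rcases huse with hend | ⟨c, d, hc, hd, hcd⟩
    · omega
    refine Or.inr (lex_of_getElem?_eq_of_lt (m := j + 1 - (s + p))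
      (fun t ht => hagree t (by omega) (by omega)) ?_ ?_ hcd)
    · rwa [getElem?_factor w (by omega), show s + p + (j + 1 - (s + p)) = j + 1 by omega]
    · rwa [getElem?_factor w (by omega), show s + (j + 1 - (s + p)) = j + 1 - p by omega]

theorem not_isLyndonWrt_factor_of_overlap {r : α → α → Prop} [IsStrictOrder α r]
    (h : IsRun w i j) (huse : UseOrd r w i j) {a₁ b₁ a₂ b₂ : ℕ}
    (hp : b₁ + 1 = a₁ + minPeriod (factor w i j)) (hia : i ≤ a₁) (hbj : b₁ ≤ j)
    (hu : IsLyndonWrt r (factor w a₁ b₁)) (ha : a₁ < a₂) (hab : a₂ ≤ b₁) (hb : b₁ < b₂)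
    (hb₂ : b₂ < w.length) : ¬ IsLyndonWrt r (factor w a₂ b₂) := by
  intro hv
  set p := minPeriod (factor w i j)
  have htrans : ∀ {x y z : α}, r x y → r y z → r x z := fun hxy hyz => _root_.trans hxy hyz
  have hyu : (factor w a₂ b₁).length < (factor w a₁ b₁).length := by
    rw [length_factor hab (by omega), length_factor (by omega) (by omega)]
    omega
  have hlt : ∀ x, x <+: factor w a₁ b₁ ∨ factor w a₁ b₁ <+: x → Lex r x (factor w a₂ b₂) := by
    have huy := (hu.lex_factor ha hab (by omega)).append_of_not_isPrefix
      (fun hpre => absurd hpre.length_le (by omega))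
    rw [← factor_append_factor w hab hb]
    rintro x (hx | ⟨s, rfl⟩)
    · exact (append_nil (factor w a₁ b₁) ▸ huy [] _).of_isPrefix_left hx
    · exact huy s _
  have hvx : Lex r (factor w a₂ b₂) (factor w a₁ (b₂ - p)) := by
    have hvy' := hv.lex_factor (k := b₁ + 1) (by omega) hb hb₂
    rw [hp] at hvy'
    rcases h.factor_eq_or_lex_factor_sub_minPeriod huse hia (by omega) (by omega) hb₂ with
      heq | hlex
    · exact heq ▸ hvy'
    · exact lex_trans htrans hvy' hlex
  refine lex_irrefl (fun x => irrefl x) _ (lex_trans htrans hvx (hlt _ ?_))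
  exact prefix_or_prefix_of_prefix (factor_isPrefix_drop w a₁ _) (factor_isPrefix_drop w a₁ _)

end IsRun

end

theorem same_order_oroots_nested_or_disjoint_general {α : Type u} [LinearOrder α]
    (r : α → α → Prop) (hr : r = ((· < ·) : α → α → Prop) ∨ r = ((· > ·) : α → α → Prop))
    (w : List α) (i1 j1 a1 b1 i2 j2 a2 b2 : ℕ)
    (h1 : IsOrootOrd r w i1 j1 a1 b1) (h2 : IsOrootOrd r w i2 j2 a2 b2)
    (hov : max a1 a2 ≤ min b1 b2) :
    (a1 ≤ a2 ∧ b2 ≤ b1) ∨ (a2 ≤ a1 ∧ b1 ≤ b2) := by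
  have : IsStrictOrder α r := by rcases hr with rfl | rfl <;> infer_instance
  have no_overlap : ∀ {i j a b i' j' a' b'}, IsOrootOrd r w i j a b →
      IsOrootOrd r w i' j' a' b' → a < a' → a' ≤ b → b < b' → False := by
    rintro i j a b i' j' a' b' ⟨hrun, huse, hp, hia, hbj, ⟨hu, -⟩, -⟩
      ⟨⟨-, hj', -⟩, -, -, -, hbj', ⟨hv, -⟩, -⟩ ha hab hb
    exact hrun.not_isLyndonWrt_factor_of_overlap huse hp hia.le hbj hu ha hab hb (by omega) hv
  rcases lt_trichotomy a1 a2 with ha | rfl | ha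
  · by_contra hb
    exact no_overlap h1 h2 ha (by omega) (by omega)
  · omega
  · by_contra hb
    exact no_overlap h2 h1 ha (by omega) (by omega)

/-- If two different Oroots obtained with respect to the same alphabet order overlap as
intervals, their overlap is the shorter of the two; consequently they are nested. -/
theorem same_order_oroots_nested_or_disjoint {α : Type u} [LinearOrder α]
    (r : α → α → Prop) (hr : r = ((· < ·) : α → α → Prop) ∨ r = ((· > ·) : α → α → Prop))
    (w : List α) (i1 j1 a1 b1 i2 j2 a2 b2 : ℕ)
    (h1 : IsOrootOrd r w i1 j1 a1 b1) (h2 : IsOrootOrd r w i2 j2 a2 b2)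
    (hne : (a1, b1) ≠ (a2, b2)) (hov : max a1 a2 ≤ min b1 b2) :
    (a1 ≤ a2 ∧ b2 ≤ b1) ∨ (a2 ≤ a1 ∧ b1 ≤ b2) :=
  same_order_oroots_nested_or_disjoint_general r hr w i1 j1 a1 b1 i2 j2 a2 b2 h1 h2 hov
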